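/- Let d ≥ 2 and y = (f, a) ∈ P_n with a ∈ I_d. Write a as a product of disjoint cycles (x_{i1} … x_{i c_i}), i = 1, …, r, and chains [x_1 … x_k] (where a(x_j) = x_{j+1} for j < k and x_k ∉ dom(a)). Then: (1) if x belongs to a chain of a, no bottom-level vertex lying above the subtree rooted at x survives under y; and (2) the ultimate rank of y satisfies rk(y) = Σ_{i=1}^{r} c_i · rk( f(x_{i1}) f(x_{i2}) ⋯ f(x_{i c_i}) ), where the product f(x_{i1}) ⋯ f(x_{i c_i}) is taken in P_{n-1}. -/

import Mathlib

/-- A partial injection of `X`, encoded as `X → Option X` injective on its domain. -/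
def IsPInj {X : Type*} (f : X → Option X) : Prop :=
  ∀ ⦃x y z : X⦄, f x = some z → f y = some z → x = y

/-- The set of partial injections (partial bijections) of `X`;
for `X = Fin d` this is the symmetric inverse semigroup `I_d`. -/
abbrev PInj (X : Type*) := {f : X → Option X // IsPInj f}

instance {X : Type*} [Fintype X] [DecidableEq X] : DecidablePred (IsPInj (X := X)) :=
  fun _ => by unfold IsPInj; infer_instance

/-- Iterate of a partial map: `pIter g m` is the `m`-th power of `g` as a partial map,
with `dom (f ∘ g) = {x ∈ dom f : f x ∈ dom g}`. -/
def pIter {α : Type*} (g : α → Option α) : ℕ → α → Option α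
  | 0, x => some x
  | m + 1, x => (g x).bind (pIter g m)

/-- The `n`-th partial wreath power `P_n` of the symmetric inverse semigroup `I_d`:
`P_0` is trivial and `P_{n+1} = {(f, a) : a ∈ I_d, f : dom a → P_n}`. -/
def Pn (d : ℕ) : ℕ → Type
  | 0 => PUnit
  | n + 1 => Σ a : PInj (Fin d), ({x : Fin d // (a.1 x).isSome} → Pn d n)

instance PnFintype (d : ℕ) : ∀ n, Fintype (Pn d n)
  | 0 => inferInstanceAs (Fintype PUnit)
  | n + 1 =>
      letI := PnFintype d n
      inferInstanceAs (Fintype (Σ a : PInj (Fin d), ({x : Fin d // (a.1 x).isSome} → Pn d n)))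

/-- The action of `y ∈ P_n` on the `d^n` bottom-level vertices of the `d`-regular rooted
tree with `n` levels (encoded as paths `Fin n → Fin d`), as a partial injection. -/
def Pn.act {d : ℕ} : ∀ {n : ℕ}, Pn d n → (Fin n → Fin d) → Option (Fin n → Fin d)
  | 0, _, v => some v
  | _ + 1, y, v =>
    if h : (y.1.1 (v 0)).isSome then
      (Pn.act (y.2 ⟨v 0, h⟩) (Fin.tail v)).map
        (fun w => Fin.cons ((y.1.1 (v 0)).get h) w)
    else none

/-- The ultimate rank `rk y = #S(y)`: the number of bottom-level vertices that survive
under the action of all powers of `y`. -/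
noncomputable def Pn.rk {d n : ℕ} (y : Pn d n) : ℕ :=
  Nat.card {v : Fin n → Fin d // ∀ m : ℕ, 1 ≤ m → (pIter (Pn.act y) m v).isSome}

theorem bind_isSome_left {α : Type*} {o : Option α} {g : α → Option α}
    (h : (o.bind g).isSome) : o.isSome := by
  cases o <;> simp_all

theorem bind_isSome_right {α : Type*} {o : Option α} {g : α → Option α}
    (h : (o.bind g).isSome) : (g (o.get (bind_isSome_left h))).isSome := by
  cases o
  · exact absurd h (by simp)
  · simpa using h

/-- Composition of partial injections: apply `a` first, then `b`,
with `dom (a ∘ b) = {x ∈ dom a : a x ∈ dom b}`. -/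
def PInj.comp {X : Type*} (a b : PInj X) : PInj X :=
  ⟨fun x => (a.1 x).bind b.1, by
    intro x y z hx hy
    rw [Option.bind_eq_some_iff] at hx hy
    obtain ⟨x', hax, hbx⟩ := hx
    obtain ⟨y', hay, hby⟩ := hy
    exact a.2 hax ((b.2 hbx hby) ▸ hay)⟩

/-- Multiplication in the partial wreath power: `(f, a) · (g, b) = (f gᵃ, ab)`. -/
def Pn.mul {d : ℕ} : ∀ {n : ℕ}, Pn d n → Pn d n → Pn d n
  | 0, _, _ => PUnit.unit
  | _ + 1, y, z =>
    ⟨PInj.comp y.1 z.1, fun x =>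
      Pn.mul (y.2 ⟨x.1, bind_isSome_left x.2⟩)
        (z.2 ⟨(y.1.1 x.1).get (bind_isSome_left x.2), bind_isSome_right x.2⟩)⟩

/-- The identity element of `P_n` (the everywhere-defined trivial automorphism). -/
def Pn.one (d : ℕ) : ∀ n, Pn d n
  | 0 => PUnit.unit
  | n + 1 =>
    ⟨⟨fun x => some x, fun _ _ _ h1 h2 => by
        rw [Option.some_inj] at h1 h2; rw [h1, h2]⟩,
      fun _ => Pn.one d n⟩

section Aux
variable {α : Type*}

theorem pIter_add (g : α → Option α) (a b : ℕ) (x : α) :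
    pIter g (a + b) x = (pIter g a x).bind (pIter g b) := by
  induction a generalizing x with
  | zero => simp [pIter]
  | succ a ih =>
      have : a + 1 + b = (a + b) + 1 := by omega
      rw [this]
      simp only [pIter]
      cases g x with
      | none => simp
      | some u => simp [ih]

theorem pIter_succ' (g : α → Option α) (m : ℕ) (x : α) :
    pIter g (m + 1) x = (pIter g m x).bind g := by
  have := pIter_add g m 1 x
  simpa [pIter] using this

theorem pIter_pinj {g : α → Option α} (hg : IsPInj g) (m : ℕ) : IsPInj (pIter g m) := by
  induction m with
  | zero => intro x y z hx hy; simp [pIter] at hx hy; rw [hx, hy]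
  | succ m ih =>
      intro x y z hx hy
      simp only [pIter, Option.bind_eq_some_iff] at hx hy
      obtain ⟨u, hu, hu'⟩ := hx
      obtain ⟨v, hv, hv'⟩ := hy
      exact hg hu ((ih hu' hv') ▸ hv)

theorem pIter_fix_mul {g : α → Option α} {k : ℕ} {u : α}
    (h : pIter g k u = some u) (t : ℕ) : pIter g (k * t) u = some u := by
  induction t with
  | zero => simp [pIter]
  | succ t ih =>
      have : k * (t + 1) = k * t + k := by ring
      rw [this, pIter_add, ih, Option.bind_some, h]

/-- On a finite set, a point all of whose forward iterates under a partial injection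
are defined must be periodic. -/
theorem recurrent_of_all_isSome [Finite α] {g : α → Option α} (hg : IsPInj g) {z : α}
    (h : ∀ m : ℕ, (pIter g m z).isSome) :
    ∃ k : ℕ, 1 ≤ k ∧ pIter g k z = some z := by
  obtain ⟨m₁, m₂, hne, heq⟩ := Finite.exists_ne_map_eq_of_infinite
    (fun m : ℕ => (pIter g m z).get (h m))
  wlog hlt : m₁ < m₂ generalizing m₁ m₂
  · exact this m₂ m₁ hne.symm heq.symm (by omega)
  set u := (pIter g m₁ z).get (h m₁) with hu
  have h1 : pIter g m₁ z = some u := (Option.some_get (h m₁)).symm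
  have h2 : pIter g m₂ z = some u := by
    rw [heq]; exact (Option.some_get (h m₂)).symm
  set k := m₂ - m₁ with hk
  have hkp : 1 ≤ k := by omega
  have h3 : pIter g k u = some u := by
    have := pIter_add g m₁ k z
    rw [show m₁ + k = m₂ by omega, h2, h1] at this
    simpa using this.symm
  set N := k * (m₁ + 1) with hN
  have hNu : pIter g N u = some u := pIter_fix_mul h3 (m₁ + 1)
  obtain ⟨w, hw⟩ := Option.isSome_iff_exists.mp (h N)
  have h4 : pIter g m₁ w = some u := by
    have e1 := pIter_add g N m₁ z
    rw [hw, Option.bind_some] at e1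
    have e2 := pIter_add g m₁ N z
    rw [h1, Option.bind_some, hNu] at e2
    rw [← e1, show N + m₁ = m₁ + N by omega, e2]
  have hwz : w = z := pIter_pinj hg m₁ h4 h1
  exact ⟨N, Nat.one_le_iff_ne_zero.mpr (by positivity), hwz ▸ hw⟩

end Aux
section ActAux
variable {d : ℕ}

theorem act_one : ∀ {n : ℕ} (v : Fin n → Fin d), Pn.act (Pn.one d n) v = some v
  | 0, v => rfl
  | n + 1, v => by
      simp only [Pn.act, Pn.one, Option.isSome_some, dite_true, act_one (Fin.tail v),
        Option.map_some, Option.get_some]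
      rw [Fin.cons_self_tail]

theorem act_mul : ∀ {n : ℕ} (y z : Pn d n) (v : Fin n → Fin d),
    Pn.act (Pn.mul y z) v = (Pn.act y v).bind (Pn.act z)
  | 0, y, z, v => rfl
  | n + 1, y, z, v => by
      rcases hy : y.1.1 (v 0) with _ | u
      · have h1 : ((Pn.mul y z).1.1 (v 0)).isSome = false := by
          simp [Pn.mul, PInj.comp, hy]
        have h2 : (y.1.1 (v 0)).isSome = false := by simp [hy]
        simp only [Pn.act, h1, h2, Bool.false_eq_true, dite_false, Option.bind_none]
      · rcases hz : z.1.1 u with _ | t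
        · have h1 : ((Pn.mul y z).1.1 (v 0)).isSome = false := by
            simp [Pn.mul, PInj.comp, hy, hz]
          have h2 : (y.1.1 (v 0)).isSome := by simp [hy]
          simp only [Pn.act, h1, Bool.false_eq_true, dite_false, h2, dite_true]
          rcases Pn.act (y.2 ⟨v 0, h2⟩) (Fin.tail v) with _ | w
          · simp
          · simp only [Option.map_some, Option.bind_some, Pn.act]
            simp [hy, hz]
        · have h1 : ((Pn.mul y z).1.1 (v 0)).isSome := by
            simp [Pn.mul, PInj.comp, hy, hz]
          have h2 : (y.1.1 (v 0)).isSome := by simp [hy]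
          simp only [Pn.act, h1, dite_true, h2]
          have ih := act_mul (y.2 ⟨v 0, h2⟩)
            (z.2 ⟨(y.1.1 (v 0)).get h2, by simp [hy, hz]⟩) (Fin.tail v)
          have harg : (Pn.mul y z).2 ⟨v 0, h1⟩
              = Pn.mul (y.2 ⟨v 0, h2⟩) (z.2 ⟨(y.1.1 (v 0)).get h2, by simp [hy, hz]⟩) := by
            rfl
          rw [harg, ih]
          rcases Pn.act (y.2 ⟨v 0, h2⟩) (Fin.tail v) with _ | w
          · simp
          · simp only [Option.bind_some, Option.map_some, Pn.act]
            have hc0 : (Fin.cons ((y.1.1 (v 0)).get h2) w : Fin (n+1) → Fin d) 0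
                = u := by simp [hy]
            have h3 : (z.1.1 ((Fin.cons ((y.1.1 (v 0)).get h2) w : Fin (n+1) → Fin d) 0)).isSome := by
              rw [hc0]; simp [hz]
            simp only [h3, dite_true]
            have harg2 : z.2 ⟨(Fin.cons ((y.1.1 (v 0)).get h2) w : Fin (n+1) → Fin d) 0, h3⟩
                = z.2 ⟨(y.1.1 (v 0)).get h2, by simp [hy, hz]⟩ := by
              congr 1
            rw [harg2, Fin.tail_cons]
            rcases Pn.act (z.2 ⟨(y.1.1 (v 0)).get h2, by simp [hy, hz]⟩) w with _ | w'
            · simp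
            · simp only [Option.map_some, Option.bind_some]
              congr 1
              · funext q
                congr 1
                · simp only [Pn.mul, PInj.comp, hy, Option.bind_some]
                  simp [hz, hc0]
end ActAux
section ActAux2
variable {d : ℕ}

theorem act_pinj : ∀ {n : ℕ} (y : Pn d n), IsPInj (Pn.act y)
  | 0, y => by intro a b c h1 h2; simp [Pn.act] at h1 h2; rw [h1, h2]
  | n + 1, y => by
      intro a b p ha hb
      simp only [Pn.act] at ha hb
      split_ifs at ha hb with h1 h2
      rcases hw : Pn.act (y.2 ⟨a 0, h1⟩) (Fin.tail a) with _ | w <;> rw [hw] at ha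
      · simp at ha
      rcases hw' : Pn.act (y.2 ⟨b 0, h2⟩) (Fin.tail b) with _ | w' <;> rw [hw'] at hb
      · simp at hb
      simp only [Option.map_some, Option.some_inj] at ha hb
      have hp0 : p 0 = (y.1.1 (a 0)).get h1 := by rw [← ha]; simp
      have hp0' : p 0 = (y.1.1 (b 0)).get h2 := by rw [← hb]; simp
      have hab0 : a 0 = b 0 := by
        apply y.1.2 (z := p 0)
        · rw [hp0]; simp
        · rw [hp0']; simp
      have hyy : y.2 ⟨a 0, h1⟩ = y.2 ⟨b 0, h2⟩ := by
        have : (⟨a 0, h1⟩ : {x : Fin d // (y.1.1 x).isSome}) = ⟨b 0, h2⟩ := Subtype.ext hab0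
        rw [this]
      have hww' : w = w' := by
        have hpt : Fin.tail p = w := by rw [← ha]; simp
        have hpt' : Fin.tail p = w' := by rw [← hb]; simp
        rw [← hpt, hpt']
      have : Fin.tail a = Fin.tail b :=
        act_pinj (y.2 ⟨a 0, h1⟩) (hw.trans (by rw [hww'])) (hyy ▸ hw')
      rw [← Fin.cons_self_tail (α := fun _ => Fin d) a,
        ← Fin.cons_self_tail (α := fun _ => Fin d) b, hab0, this]

theorem act_top {n : ℕ} (y : Pn d (n + 1)) {v w : Fin (n + 1) → Fin d}
    (h : Pn.act y v = some w) : y.1.1 (v 0) = some (w 0) := by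
  simp only [Pn.act] at h
  split_ifs at h with h1
  rcases hw : Pn.act (y.2 ⟨v 0, h1⟩) (Fin.tail v) with _ | w' <;> rw [hw] at h
  · simp at h
  · simp only [Option.map_some, Option.some_inj] at h
    rw [← h]
    simp [Option.some_get]

theorem pIter_act_top {n : ℕ} (y : Pn d (n + 1)) (m : ℕ) (v : Fin (n + 1) → Fin d)
    (h : (pIter (Pn.act y) m v).isSome) : (pIter y.1.1 m (v 0)).isSome := by
  induction m generalizing v with
  | zero => simp [pIter]
  | succ m ih =>
      simp only [pIter] at h ⊢
      rcases hv : Pn.act y v with _ | w <;> rw [hv] at h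
      · simp at h
      · rw [act_top y hv, Option.bind_some]
        exact ih w (by simpa using h)

end ActAux2
/-- The product `g i j · g i (j+1) ⋯ g i (j+m-1)` in `P_n`. -/
def Qp {d n r : ℕ} {c : Fin r → ℕ} (g : (i : Fin r) → ZMod (c i) → Pn d n)
    (i : Fin r) : ℕ → ZMod (c i) → Pn d n
  | 0, _ => Pn.one d n
  | m + 1, j => Pn.mul (g i j) (Qp g i m (j + 1))

section QpAux
variable {d n r : ℕ} {c : Fin r → ℕ} (g : (i : Fin r) → ZMod (c i) → Pn d n) (i : Fin r)

theorem Qp_add : ∀ (a b : ℕ) (j : ZMod (c i)) (w : Fin n → Fin d),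
    Pn.act (Qp g i (a + b) j) w
      = (Pn.act (Qp g i a j) w).bind (Pn.act (Qp g i b (j + (a : ℕ)))) := by
  intro a
  induction a with
  | zero => intro b j w; simp [Qp, act_one]
  | succ a ih =>
      intro b j w
      rw [show a + 1 + b = (a + b) + 1 by omega]
      show Pn.act (Pn.mul (g i j) (Qp g i (a + b) (j + 1))) w = _
      rw [act_mul]
      have : Pn.act (Qp g i (a + 1) j) w
          = (Pn.act (g i j) w).bind (Pn.act (Qp g i a (j + 1))) := by
        show Pn.act (Pn.mul (g i j) (Qp g i a (j + 1))) w = _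
        rw [act_mul]
      rw [this]
      rcases Pn.act (g i j) w with _ | u
      · simp
      · simp only [Option.bind_some]
        rw [ih b (j + 1) u]
        congr 2
        push_cast
        ring

variable {y : Pn d (n + 1)} {x : (i : Fin r) → ZMod (c i) → Fin d}
  (hcyc : ∀ (i : Fin r) (j : ZMod (c i)), y.1.1 (x i j) = some (x i (j + 1)))
  (hg : ∀ (i : Fin r) (j : ZMod (c i)) (h : (y.1.1 (x i j)).isSome),
      y.2 ⟨x i j, h⟩ = g i j)

include hcyc hg in
theorem cycle_act (j : ZMod (c i)) (w : Fin n → Fin d) :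
    Pn.act y (Fin.cons (x i j) w)
      = (Pn.act (g i j) w).map (fun u => Fin.cons (x i (j + 1)) u) := by
  have h : (y.1.1 ((Fin.cons (x i j) w : Fin (n+1) → Fin d) 0)).isSome := by
    simp [hcyc i j]
  simp only [Pn.act, h, dite_true]
  have h' : (y.1.1 (x i j)).isSome := by simp [hcyc i j]
  have e1 : y.2 ⟨(Fin.cons (x i j) w : Fin (n+1) → Fin d) 0, h⟩ = g i j := by
    have : (⟨(Fin.cons (x i j) w : Fin (n+1) → Fin d) 0, h⟩ :
        {z : Fin d // (y.1.1 z).isSome}) = ⟨x i j, h'⟩ := Subtype.ext (by simp)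
    rw [this, hg i j h']
  rw [e1, Fin.tail_cons]
  congr 1
  funext u
  congr 1
  have : (y.1.1 ((Fin.cons (x i j) w : Fin (n+1) → Fin d) 0)) = some (x i (j + 1)) := by
    simp [hcyc i j]
  simp only [Fin.cons_zero] at this ⊢
  simp [hcyc i j]

include hcyc hg in
theorem cycle_pIter : ∀ (m : ℕ) (j : ZMod (c i)) (w : Fin n → Fin d),
    pIter (Pn.act y) m (Fin.cons (x i j) w)
      = (Pn.act (Qp g i m j) w).map (fun u => Fin.cons (x i (j + (m : ℕ))) u) := by
  intro m
  induction m with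
  | zero => intro j w; simp [pIter, Qp, act_one]
  | succ m ih =>
      intro j w
      show (Pn.act y _).bind _ = _
      rw [cycle_act g i hcyc hg j w]
      have : Pn.act (Qp g i (m + 1) j) w
          = (Pn.act (g i j) w).bind (Pn.act (Qp g i m (j + 1))) := by
        show Pn.act (Pn.mul (g i j) (Qp g i m (j + 1))) w = _
        rw [act_mul]
      rw [this]
      rcases Pn.act (g i j) w with _ | u
      · simp
      · simp only [Option.map_some, Option.bind_some]
        rw [ih (j + 1) u]
        congr 2
        push_cast
        ring

theorem Qp_cycle_pow (hci : 1 ≤ c i) (j : ZMod (c i)) :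
    ∀ (m : ℕ) (w : Fin n → Fin d),
      pIter (Pn.act (Qp g i (c i) j)) m w = Pn.act (Qp g i (m * c i) j) w := by
  intro m
  induction m with
  | zero => intro w; simp [pIter, Qp, act_one]
  | succ m ih =>
      intro w
      show (Pn.act (Qp g i (c i) j) w).bind _ = _
      have hj : j + ((c i : ℕ) : ZMod (c i)) = j := by
        simp [ZMod.natCast_self]
      rw [show (m + 1) * c i = c i + m * c i by ring, Qp_add, hj]
      rcases Pn.act (Qp g i (c i) j) w with _ | u
      · simp
      · simp only [Option.bind_some]
        exact ih u

/-- A tail `w` survives all partial products starting at phase `j` iff it survives all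
powers of the full cycle product at phase `j`. -/
theorem surv_iff (hci : 1 ≤ c i) (j : ZMod (c i)) (w : Fin n → Fin d) :
    (∀ m : ℕ, (Pn.act (Qp g i m j) w).isSome)
      ↔ (∀ m : ℕ, 1 ≤ m → (pIter (Pn.act (Qp g i (c i) j)) m w).isSome) := by
  constructor
  · intro h m _
    rw [Qp_cycle_pow g i hci j]
    exact h _
  · intro h m
    rcases Nat.eq_zero_or_pos m with hm | hm
    · subst hm; simp [Qp, act_one]
    · have h1 := h m hm
      rw [Qp_cycle_pow g i hci j] at h1
      have hle : m ≤ m * c i := Nat.le_mul_of_pos_right m hci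
      rw [show m * c i = m + (m * c i - m) by omega, Qp_add] at h1
      exact bind_isSome_left h1

end QpAux
section Rotation
variable {W : Type*} [Fintype W]

theorem rot_key {s t : W → Option W} {w u : W} (hsw : s w = some u) :
    ∀ m : ℕ, pIter (fun x => (t x).bind s) m u
      = (pIter (fun x => (s x).bind t) m w).bind s := by
  intro m
  induction m generalizing w u with
  | zero => simp [pIter, hsw]
  | succ m ih =>
      show ((t u).bind s).bind _ = _
      rcases htu : t u with _ | u2
      · simp only [Option.bind_none]
        rcases m with _ | m
        · simp [pIter, hsw, htu]
        · show _ = ((((s w).bind t).bind _).bind s)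
          rw [hsw, Option.bind_some, htu]
          simp
      · simp only [Option.bind_some]
        rcases hsu2 : s u2 with _ | u3
        · simp only [Option.bind_none]
          rcases m with _ | m
          · show _ = (((s w).bind t).bind (pIter _ 0)).bind s
            rw [hsw, Option.bind_some, htu]
            simp [pIter, hsu2]
          · show _ = (((s w).bind t).bind _).bind s
            rw [hsw, Option.bind_some, htu, Option.bind_some]
            show _ = ((((s u2).bind t).bind _).bind s)
            rw [hsu2]
            simp
        · simp only [Option.bind_some]
          rw [ih hsu2]
          show _ = (((s w).bind t).bind _).bind s
          rw [hsw, Option.bind_some, htu, Option.bind_some]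

theorem card_S_le (s t : W → Option W) (hs : IsPInj s) :
    Nat.card {w : W // ∀ m : ℕ, 1 ≤ m → (pIter (fun x => (s x).bind t) m w).isSome}
      ≤ Nat.card {w : W // ∀ m : ℕ, 1 ≤ m → (pIter (fun x => (t x).bind s) m w).isSome} := by
  have key : ∀ w : {w : W // ∀ m : ℕ, 1 ≤ m →
      (pIter (fun x => (s x).bind t) m w).isSome}, (s w.1).isSome := by
    intro w
    have h1 := w.2 1 le_rfl
    rw [pIter_succ'] at h1
    simp only [pIter, Option.bind_some] at h1
    exact bind_isSome_left h1
  refine Nat.card_le_card_of_injective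
    (fun w => ⟨(s w.1).get (key w), ?_⟩) ?_
  · intro m _
    have hsw : s w.1 = some ((s w.1).get (key w)) := (Option.some_get (key w)).symm
    rw [rot_key hsw m]
    have hm1 := w.2 (m + 1) (by omega)
    rw [pIter_succ'] at hm1
    rcases ho : pIter (fun x => (s x).bind t) m w.1 with _ | v
    · rw [ho] at hm1; simp at hm1
    · simp only [ho, Option.bind_some] at hm1 ⊢
      exact bind_isSome_left hm1
  · intro w w' hww'
    have h1 : s w.1 = some ((s w.1).get (key w)) := (Option.some_get (key w)).symm
    have h2 : s w'.1 = some ((s w'.1).get (key w')) := (Option.some_get (key w')).symm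
    have : (s w.1).get (key w) = (s w'.1).get (key w') := congrArg Subtype.val hww'
    exact Subtype.ext (hs h1 (by rw [h2, ← this]))

theorem card_S_comm (s t : W → Option W) (hs : IsPInj s) (ht : IsPInj t) :
    Nat.card {w : W // ∀ m : ℕ, 1 ≤ m → (pIter (fun x => (s x).bind t) m w).isSome}
      = Nat.card {w : W // ∀ m : ℕ, 1 ≤ m → (pIter (fun x => (t x).bind s) m w).isSome} :=
  le_antisymm (card_S_le s t hs) (card_S_le t s ht)

end Rotation

theorem rk_congr {d n : ℕ} {z₁ z₂ : Pn d n} (h : ∀ v, Pn.act z₁ v = Pn.act z₂ v) :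
    Pn.rk z₁ = Pn.rk z₂ := by
  unfold Pn.rk
  have : Pn.act z₁ = Pn.act z₂ := funext h
  rw [this]
section QpRot
variable {d n r : ℕ} {c : Fin r → ℕ} (g : (i : Fin r) → ZMod (c i) → Pn d n) (i : Fin r)

theorem act_Qp_one (j : ZMod (c i)) (v : Fin n → Fin d) :
    Pn.act (Qp g i 1 j) v = Pn.act (g i j) v := by
  show Pn.act (Pn.mul (g i j) (Qp g i 0 (j + 1))) v = _
  rw [act_mul]
  rcases Pn.act (g i j) v with _ | u
  · simp
  · simp [Qp, act_one]

theorem rk_Qp_rot (hci : 1 ≤ c i) (j : ZMod (c i)) :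
    Pn.rk (Qp g i (c i) (j + 1)) = Pn.rk (Qp g i (c i) j) := by
  have hc0 : ((c i : ℕ) : ZMod (c i)) = 0 := ZMod.natCast_self _
  have hcsub : ((c i - 1 : ℕ) : ZMod (c i)) = ((c i : ℕ) : ZMod (c i)) - 1 := by
    rw [Nat.cast_sub (by omega)]; push_cast; ring
  have hA : ∀ v, Pn.act (Qp g i (c i) j) v
      = (Pn.act (g i j) v).bind (Pn.act (Qp g i (c i - 1) (j + 1))) := by
    intro v
    have h := Qp_add g i 1 (c i - 1) j v
    rw [show 1 + (c i - 1) = c i from by omega] at h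
    rw [h, act_Qp_one]
    congr 2
    push_cast
    ring
  have hB : ∀ v, Pn.act (Qp g i (c i) (j + 1)) v
      = (Pn.act (Qp g i (c i - 1) (j + 1)) v).bind (Pn.act (g i j)) := by
    intro v
    have h := Qp_add g i (c i - 1) 1 (j + 1) v
    rw [show c i - 1 + 1 = c i from by omega] at h
    have hph : j + 1 + ((c i - 1 : ℕ) : ZMod (c i)) = j := by
      rw [hcsub, hc0]; ring
    rw [h, hph]
    rcases Pn.act (Qp g i (c i - 1) (j + 1)) v with _ | u
    · simp
    · simp only [Option.bind_some]
      exact act_Qp_one g i j u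
  unfold Pn.rk
  have e1 : Pn.act (Qp g i (c i) j)
      = fun x => (Pn.act (g i j) x).bind (Pn.act (Qp g i (c i - 1) (j + 1))) := funext hA
  have e2 : Pn.act (Qp g i (c i) (j + 1))
      = fun x => (Pn.act (Qp g i (c i - 1) (j + 1)) x).bind (Pn.act (g i j)) := funext hB
  rw [e1, e2]
  exact card_S_comm _ _ (act_pinj _) (act_pinj _)

theorem rk_Qp_phase (hci : 1 ≤ c i) (j : ZMod (c i)) :
    Pn.rk (Qp g i (c i) j) = Pn.rk (Qp g i (c i) 0) := by
  haveI : NeZero (c i) := ⟨by omega⟩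
  have key : ∀ m : ℕ, Pn.rk (Qp g i (c i) (m : ZMod (c i))) = Pn.rk (Qp g i (c i) 0) := by
    intro m
    induction m with
    | zero => simp
    | succ m ih =>
        rw [show ((m + 1 : ℕ) : ZMod (c i)) = (m : ZMod (c i)) + 1 by push_cast; ring,
          rk_Qp_rot g i hci, ih]
  have := key j.val
  rwa [ZMod.natCast_val, ZMod.cast_id] at this

end QpRot

/-- Chain of actions along a list of indices. -/
def pChain {d n : ℕ} {ι : Type*} (u : ι → Pn d n) :
    List ι → (Fin n → Fin d) → Option (Fin n → Fin d)
  | [], w => some w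
  | j :: l, w => (Pn.act (u j) w).bind (pChain u l)

theorem act_foldl {d n : ℕ} {ι : Type*} (u : ι → Pn d n) :
    ∀ (l : List ι) (e : Pn d n) (v : Fin n → Fin d),
      Pn.act (l.foldl (fun p j => Pn.mul p (u j)) e) v = (Pn.act e v).bind (pChain u l) := by
  intro l
  induction l with
  | nil => intro e v; simp [pChain]
  | cons j l ih =>
      intro e v
      simp only [List.foldl_cons, pChain]
      rw [ih (Pn.mul e (u j)) v, act_mul]
      rcases Pn.act e v with _ | w
      · simp
      · simp

section QpList
variable {d n r : ℕ} {c : Fin r → ℕ} (g : (i : Fin r) → ZMod (c i) → Pn d n) (i : Fin r)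

theorem act_Qp_range : ∀ (m jn : ℕ) (v : Fin n → Fin d),
    Pn.act (Qp g i m (jn : ZMod (c i))) v
      = pChain (g i) ((List.range' jn m).map (fun k => (k : ZMod (c i)))) v := by
  intro m
  induction m with
  | zero => intro jn v; simp [Qp, act_one, pChain]
  | succ m ih =>
      intro jn v
      show Pn.act (Pn.mul (g i (jn : ZMod (c i))) (Qp g i m ((jn : ZMod (c i)) + 1))) v = _
      rw [act_mul, List.range'_succ]
      show _ = (Pn.act (g i (jn : ZMod (c i))) v).bind
        (pChain (g i) ((List.range' (jn + 1) m).map (fun k => (k : ZMod (c i)))))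
      rcases Pn.act (g i (jn : ZMod (c i))) v with _ | w
      · simp
      · simp only [Option.bind_some]
        rw [show (jn : ZMod (c i)) + 1 = ((jn + 1 : ℕ) : ZMod (c i)) by push_cast; ring]
        exact ih (jn + 1) w

theorem rk_foldl_eq_Qp :
    Pn.rk ((List.range (c i)).foldl
        (fun p j => Pn.mul p (g i (j : ZMod (c i)))) (Pn.one d n))
      = Pn.rk (Qp g i (c i) 0) := by
  apply rk_congr
  intro v
  rw [act_foldl (g i), act_one, Option.bind_some]
  have h2 := act_Qp_range g i (c i) 0 v
  rw [show ((0 : ℕ) : ZMod (c i)) = 0 by push_cast; ring] at h2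
  rw [h2, List.range_eq_range']
  simp

end QpList
theorem nat_card_sigma {ι : Type*} [Fintype ι] (β : ι → Type*) [∀ i, Finite (β i)] :
    Nat.card (Σ i, β i) = ∑ i, Nat.card (β i) := by
  classical
  letI : ∀ i, Fintype (β i) := fun i => Fintype.ofFinite _
  simp [Nat.card_eq_fintype_card, Fintype.card_sigma]
/-- Let `y = (f, a) ∈ P_{n+1}` and suppose the cycles of the top-level
partial bijection `a = y.1` are `(x_{i,0} … x_{i,c_i - 1})`, `i : Fin r` (the points of `a`
not listed in a cycle are exactly those lying on chains, i.e. those not returning to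
themselves under any power of `a`).  Then (1) if `z` lies on a chain of `a`, no bottom-level
vertex above `z` survives under `y`; and (2)
`rk y = Σ_i c_i · rk (f(x_{i,0}) f(x_{i,1}) ⋯ f(x_{i,c_i - 1}))`,
the products being taken in `P_n`. -/
theorem ultimate_rank_cycle_decomposition
    (d n : ℕ) (hd : 2 ≤ d) (y : Pn d (n + 1))
    (r : ℕ) (c : Fin r → ℕ) (hc : ∀ i, 1 ≤ c i)
    (x : (i : Fin r) → ZMod (c i) → Fin d)
    (hxinj : Function.Injective fun p : Σ i : Fin r, ZMod (c i) => x p.1 p.2)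
    (hcyc : ∀ (i : Fin r) (j : ZMod (c i)), y.1.1 (x i j) = some (x i (j + 1)))
    (hall : ∀ z : Fin d, (∃ k : ℕ, 1 ≤ k ∧ pIter y.1.1 k z = some z) → ∃ i j, x i j = z)
    (g : (i : Fin r) → ZMod (c i) → Pn d n)
    (hg : ∀ (i : Fin r) (j : ZMod (c i)) (h : (y.1.1 (x i j)).isSome),
      y.2 ⟨x i j, h⟩ = g i j) :
    (∀ z : Fin d, (¬ ∃ k : ℕ, 1 ≤ k ∧ pIter y.1.1 k z = some z) →
      ∀ v : Fin (n + 1) → Fin d, v 0 = z →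
        ¬ (∀ m : ℕ, 1 ≤ m → (pIter (Pn.act y) m v).isSome))
    ∧
    Pn.rk y = ∑ i : Fin r, c i *
      Pn.rk ((List.range (c i)).foldl
        (fun p j => Pn.mul p (g i (j : ZMod (c i)))) (Pn.one d n)) := by
  have hrec : ∀ v : Fin (n + 1) → Fin d,
      (∀ m : ℕ, 1 ≤ m → (pIter (Pn.act y) m v).isSome) →
      ∃ k : ℕ, 1 ≤ k ∧ pIter y.1.1 k (v 0) = some (v 0) := by
    intro v hsurv
    apply recurrent_of_all_isSome y.1.2
    intro m
    rcases Nat.eq_zero_or_pos m with hm | hm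
    · subst hm; simp [pIter]
    · exact pIter_act_top y m v (hsurv m hm)
  constructor
  · intro z hz v hv0 hsurv
    exact hz (hv0 ▸ hrec v hsurv)
  · haveI : ∀ i, NeZero (c i) := fun i => ⟨by have := hc i; omega⟩
    -- the equivalence between survivors of `y` and pairs (cycle point, surviving tail)
    set T := (p : Σ i : Fin r, ZMod (c i)) ×
      {w : Fin n → Fin d // ∀ m : ℕ, (Pn.act (Qp g p.1 m p.2) w).isSome} with hT
    let f : T → {v : Fin (n + 1) → Fin d //
        ∀ m : ℕ, 1 ≤ m → (pIter (Pn.act y) m v).isSome} :=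
      fun t => ⟨Fin.cons (x t.1.1 t.1.2) t.2.1, fun m _ => by
        rw [cycle_pIter g t.1.1 hcyc hg m t.1.2 t.2.1]
        simpa using t.2.2 m⟩
    have hfinj : Function.Injective f := by
      intro t1 t2 h
      have hval : Fin.cons (x t1.1.1 t1.1.2) t1.2.1
          = (Fin.cons (x t2.1.1 t2.1.2) t2.2.1 : Fin (n + 1) → Fin d) :=
        congrArg Subtype.val h
      have h0 : x t1.1.1 t1.1.2 = x t2.1.1 t2.1.2 := by
        have := congrFun hval 0
        simpa using this
      have hp : t1.1 = t2.1 := hxinj h0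
      have htail : t1.2.1 = t2.2.1 := by
        have := congrArg Fin.tail hval
        simpa [Fin.tail_cons] using this
      rcases t1 with ⟨p1, w1⟩
      rcases t2 with ⟨p2, w2⟩
      cases hp
      rw [show w1 = w2 from Subtype.ext htail]
    have hfsurj : Function.Surjective f := by
      rintro ⟨v, hv⟩
      obtain ⟨i, j, hij⟩ := hall (v 0) (hrec v hv)
      have hvcons : v = Fin.cons (x i j) (Fin.tail v) := by
        rw [hij, Fin.cons_self_tail]
      have hw : ∀ m : ℕ, (Pn.act (Qp g i m j) (Fin.tail v)).isSome := by
        intro m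
        rcases Nat.eq_zero_or_pos m with hm | hm
        · subst hm; simp [Qp, act_one]
        · have := hv m hm
          rw [hvcons, cycle_pIter g i hcyc hg m j (Fin.tail v)] at this
          simpa using this
      refine ⟨⟨⟨i, j⟩, ⟨Fin.tail v, hw⟩⟩, ?_⟩
      apply Subtype.ext
      exact hvcons.symm
    have hcard : Pn.rk y = Nat.card T := by
      unfold Pn.rk
      exact (Nat.card_eq_of_bijective f ⟨hfinj, hfsurj⟩).symm
    rw [hcard, hT, nat_card_sigma, ← Finset.univ_sigma_univ, Finset.sum_sigma]
    apply Finset.sum_congr rfl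
    intro i _
    have hfiber : ∀ j : ZMod (c i),
        Nat.card {w : Fin n → Fin d // ∀ m : ℕ, (Pn.act (Qp g i m j) w).isSome}
          = Pn.rk (Qp g i (c i) j) := by
      intro j
      unfold Pn.rk
      exact Nat.card_congr (Equiv.subtypeEquivRight (fun w => surv_iff g i (hc i) j w))
    calc ∑ j : ZMod (c i),
          Nat.card {w : Fin n → Fin d // ∀ m : ℕ, (Pn.act (Qp g i m j) w).isSome}
        = ∑ j : ZMod (c i), Pn.rk (Qp g i (c i) 0) := by
          apply Finset.sum_congr rfl
          intro j _
          rw [hfiber j, rk_Qp_phase g i (hc i) j]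
      _ = c i * Pn.rk (Qp g i (c i) 0) := by
          rw [Finset.sum_const, Finset.card_univ, ZMod.card, smul_eq_mul]
      _ = _ := by rw [rk_foldl_eq_Qp g i]
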